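/- Let Δ̃ be a finite reduced crystallographic root system in a real inner product space Ẽ with Weyl group W̃, positive system Δ̃⁺ and half-sum of positive roots ρ̃. Let Δ ⊆ Δ̃ be a symmetric closed subsystem with positive system Δ⁺ = Δ ∩ Δ̃⁺ and half-sum ρ ∈ E := span_ℝ(Δ), let W ≤ W̃ be the subgroup generated by the reflections s_α for α ∈ Δ (which preserves E), and let r : Ẽ → E be the orthogonal projection with respect to the W̃-invariant inner product. Then for every w ∈ W whose inversion set in Δ̃ satisfies Φ̃_w = Δ̃⁺ ∩ w⁻¹(−Δ̃⁺) ⊆ Δ, and for every λ̃ ∈ Ẽ, one has r( w(λ̃+ρ̃) − ρ̃ ) = w( r(λ̃)+ρ ) − ρ; that is, r intertwines the affine action of w on Ẽ (defined with ρ̃) with its affine action on E (defined with ρ). -/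

import Mathlib

open scoped InnerProductSpace Classical

/-- A finite reduced crystallographic root system, together with a fixed positive system
(cut out by a linear functional not vanishing on any root), in a real inner product space. -/
structure RootSystemData (E : Type*) [NormedAddCommGroup E] [InnerProductSpace ℝ E] where
  roots : Finset E
  zero_not_mem : (0 : E) ∉ roots
  span_top : Submodule.span ℝ (roots : Set E) = ⊤
  reduced : ∀ α ∈ roots, ∀ t : ℝ, t • α ∈ roots → t = 1 ∨ t = -1
  crystallographic : ∀ α ∈ roots, ∀ β ∈ roots, ∃ n : ℤ, 2 * ⟪β, α⟫_ℝ / ⟪α, α⟫_ℝ = (n : ℝ)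
  reflect_mem : ∀ α ∈ roots, ∀ β ∈ roots, β - (2 * ⟪β, α⟫_ℝ / ⟪α, α⟫_ℝ) • α ∈ roots
  posFun : E →ₗ[ℝ] ℝ
  posFun_ne_zero : ∀ α ∈ roots, posFun α ≠ 0

namespace RootSystemData

variable {E : Type*} [NormedAddCommGroup E] [InnerProductSpace ℝ E] [FiniteDimensional ℝ E]

/-- The orthogonal reflection along the root `α` (reflection through the hyperplane `α^⊥`). -/
noncomputable def reflect (α : E) : E ≃ₗᵢ[ℝ] E := Submodule.reflection (ℝ ∙ α)ᗮ

variable (R : RootSystemData E)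

/-- The Weyl group: the group of isometries generated by the reflections along the roots. -/
noncomputable def weyl : Subgroup (E ≃ₗᵢ[ℝ] E) :=
  Subgroup.closure { s | ∃ α ∈ R.roots, s = reflect α }

/-- The positive roots `Δ⁺`. -/
noncomputable def pos : Finset E := R.roots.filter fun α => 0 < R.posFun α

/-- `ρ`, the half-sum of the positive roots. -/
noncomputable def rho : E := (2 : ℝ)⁻¹ • ∑ α ∈ R.pos, α

/-- The inversion set `Φ_w = Δ⁺ ∩ w⁻¹(Δ⁻)`. -/
noncomputable def inv (w : E ≃ₗᵢ[ℝ] E) : Finset E :=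
  R.pos.filter fun α => -(w α) ∈ R.pos

/-- `⟨Φ_w⟩`, the sum of the elements of the inversion set of `w`. -/
noncomputable def invSum (w : E ≃ₗᵢ[ℝ] E) : E := ∑ α ∈ R.inv w, α

/-- The length of `w`, i.e. the cardinality of its inversion set. -/
noncomputable def len (w : E ≃ₗᵢ[ℝ] E) : ℕ := (R.inv w).card

/-- The affine (dot) action `w · λ = w(λ + ρ) - ρ`. -/
noncomputable def dot (w : E ≃ₗᵢ[ℝ] E) (l : E) : E := w (l + R.rho) - R.rho

/-- Membership in the weight lattice `𝒫`. -/
def IsWeight (l : E) : Prop :=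
  ∀ α ∈ R.roots, ∃ n : ℤ, 2 * ⟪l, α⟫_ℝ / ⟪α, α⟫_ℝ = (n : ℝ)

/-- Membership in the dominant monoid `𝒫⁺`. -/
def IsDominant (l : E) : Prop :=
  R.IsWeight l ∧ ∀ α ∈ R.pos, 0 ≤ ⟪l, α⟫_ℝ

/-- The simple roots: the indecomposable positive roots. -/
noncomputable def simples : Finset E :=
  R.pos.filter fun α => ¬ ∃ β ∈ R.pos, ∃ γ ∈ R.pos, α = β + γ

end RootSystemData

/-! The shift `w ρ̃ - ρ̃` is the sum of `w α` over the inversion set `Φ̃_w`, and likewise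
`w ρ - ρ` is the sum over the inversion set of `w` in `Δ`. When `Φ̃_w ⊆ Δ` the two inversion sets
agree, so both shifts equal the same vector `S ∈ E`. Since `w` permutes `Δ`, it preserves `E`
and hence commutes with `r`, and `r (w λ̃ + S) = w (r λ̃) + S`. -/

namespace LinearIsometryEquiv

variable {R E : Type*} [Semiring R] [SeminormedAddCommGroup E] [Module R E]

def setStabilizer (S : Set E) : Subgroup (E ≃ₗᵢ[R] E) where
  carrier := {w | ∀ x, w x ∈ S ↔ x ∈ S}
  mul_mem' hw hv x := (hw _).trans (hv x)
  one_mem' _ := Iff.rfl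
  inv_mem' {w} hw x := by
    rw [← hw, coe_inv, apply_symm_apply]

theorem symm_mem_setStabilizer {S : Set E} {w : E ≃ₗᵢ[R] E} (hw : w ∈ setStabilizer S) :
    w.symm ∈ setStabilizer S :=
  inv_mem hw

theorem image_eq_of_mem_setStabilizer {S : Set E} {w : E ≃ₗᵢ[R] E} (hw : w ∈ setStabilizer S) :
    w '' S = S := by
  ext x
  refine ⟨?_, fun hx => ⟨w.symm x, ?_, w.apply_symm_apply x⟩⟩
  · rintro ⟨y, hy, rfl⟩
    exact (hw y).2 hy
  · rwa [← hw, apply_symm_apply]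

end LinearIsometryEquiv

theorem Submodule.starProjection_apply_of_map_eq {𝕜 E : Type*} [RCLike 𝕜] [NormedAddCommGroup E]
    [InnerProductSpace 𝕜 E] (K : Submodule 𝕜 E) [K.HasOrthogonalProjection] {w : E ≃ₗᵢ[𝕜] E}
    (hK : K.map (w.toLinearEquiv : E →ₗ[𝕜] E) = K) (x : E) :
    K.starProjection (w x) = w (K.starProjection x) := by
  have h := K.starProjection_map_apply w (w x)
  simpa only [hK, LinearIsometryEquiv.symm_apply_apply] using h

theorem Finset.sum_ite_neg_apply_eq_sum {R M : Type*} [Semiring R] [AddCommGroup M] [Module R M]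
    (w : M ≃ₗ[R] M) {P : Finset M}
    (hP : ∀ α ∈ P, -α ∉ P) (hw : ∀ α ∈ P, w α ∈ P ∨ -w α ∈ P)
    (hw' : ∀ α ∈ P, w.symm α ∈ P ∨ -w.symm α ∈ P) :
    ∑ α ∈ P, (if -w α ∈ P then -w α else w α) = ∑ α ∈ P, α := by
  refine Finset.sum_nbij' (fun α => if -w α ∈ P then -w α else w α)
    (fun β => if -w.symm β ∈ P then -w.symm β else w.symm β) ?_ ?_ ?_ ?_ (fun _ _ => rfl)
  · intro α hα
    split_ifs with h
    exacts [h, (hw α hα).resolve_right h]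
  · intro β hβ
    split_ifs with h
    exacts [h, (hw' β hβ).resolve_right h]
  · intro α hα
    by_cases h : -w α ∈ P
    · simp [h, hα]
    · simp [h, hP α hα]
  · intro β hβ
    by_cases h : -w.symm β ∈ P
    · simp [h, hβ]
    · simp [h, hP β hβ]

/-- Since `α ↦ ±w α` permutes `P`, applying `w` to the half-sum of `P` only changes the terms
with `-w α ∈ P`, each by `w α - (-w α)`. -/
theorem Finset.apply_halfSum_sub_halfSum {K M : Type*} [Field K] [CharZero K] [AddCommGroup M]
    [Module K M] (w : M ≃ₗ[K] M) {P : Finset M} (hP : ∀ α ∈ P, -α ∉ P)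
    (hw : ∀ α ∈ P, w α ∈ P ∨ -w α ∈ P)
    (hw' : ∀ α ∈ P, w.symm α ∈ P ∨ -w.symm α ∈ P) :
    w ((2 : K)⁻¹ • ∑ α ∈ P, α) - (2 : K)⁻¹ • ∑ α ∈ P, α = ∑ α ∈ P with -w α ∈ P, w α := by
  have hperm := Finset.sum_ite_neg_apply_eq_sum w hP hw hw'
  have hterm : ∀ α ∈ P, (if -w α ∈ P then -w α else w α) =
      w α - (2 : K) • (if -w α ∈ P then w α else 0) := by
    intro α _
    split_ifs
    · module
    · simp
  rw [Finset.sum_congr rfl hterm, Finset.sum_sub_distrib, ← Finset.smul_sum,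
    ← Finset.sum_filter] at hperm
  rw [map_smul, map_sum, ← hperm]
  module

namespace RootSystemData

variable {E : Type*} [NormedAddCommGroup E] [InnerProductSpace ℝ E]

theorem reflect_apply (α β : E) : reflect α β = β - (2 * ⟪β, α⟫_ℝ / ⟪α, α⟫_ℝ) • α := by
  rw [reflect, Submodule.reflection_orthogonal_apply, Submodule.reflection_singleton_apply,
    real_inner_self_eq_norm_sq, real_inner_comm, RCLike.ofReal_real_eq_id, id]
  module

theorem reflect_neg (α : E) : reflect (-α) = reflect α := by
  ext β
  rw [reflect_apply, reflect_apply, inner_neg_right, inner_neg_neg]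
  module

theorem reflect_reflect (α β : E) : reflect α (reflect α β) = β :=
  Submodule.reflection_reflection _ _

theorem reflect_mem_setStabilizer {α : E} {S : Set E} (h : ∀ β ∈ S, reflect α β ∈ S) :
    reflect α ∈ LinearIsometryEquiv.setStabilizer S := fun β =>
  ⟨fun hβ => reflect_reflect α β ▸ h _ hβ, h β⟩

theorem closure_reflect_le_setStabilizer {A S : Set E} (h : ∀ α ∈ A, ∀ β ∈ S, reflect α β ∈ S) :
    Subgroup.closure {s | ∃ α ∈ A, s = reflect α} ≤ LinearIsometryEquiv.setStabilizer S := by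
  rw [Subgroup.closure_le]
  rintro _ ⟨α, hα, rfl⟩
  exact reflect_mem_setStabilizer (h α hα)

variable (R : RootSystemData E)

theorem ne_zero_of_mem_roots {α : E} (hα : α ∈ R.roots) : α ≠ 0 := by
  rintro rfl
  exact R.zero_not_mem hα

theorem inner_self_pos {α : E} (hα : α ∈ R.roots) : 0 < ⟪α, α⟫_ℝ :=
  real_inner_self_pos.2 (R.ne_zero_of_mem_roots hα)

theorem reflect_mem_roots {α β : E} (hα : α ∈ R.roots) (hβ : β ∈ R.roots) :
    reflect α β ∈ R.roots := by
  rw [reflect_apply]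
  exact R.reflect_mem α hα β hβ

theorem neg_mem_roots {α : E} (hα : α ∈ R.roots) : -α ∈ R.roots := by
  have h := R.reflect_mem_roots hα hα
  rwa [reflect, Submodule.reflection_orthogonalComplement_singleton_eq_neg] at h

theorem inner_mul_inner_lt_of_inner_pos {α β : E} (hα : α ∈ R.roots) (hβ : β ∈ R.roots)
    (hpos : 0 < ⟪β, α⟫_ℝ) (hne : β ≠ α) : ⟪β, α⟫_ℝ * ⟪β, α⟫_ℝ < ⟪β, β⟫_ℝ * ⟪α, α⟫_ℝ := by
  have hαn : 0 < ‖α‖ := norm_pos_iff.2 (R.ne_zero_of_mem_roots hα)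
  have hlt : ⟪β, α⟫_ℝ < ‖β‖ * ‖α‖ := by
    refine inner_lt_norm_mul_iff_real.2 fun h => hne ?_
    -- `β` is a positive multiple of `α`, and reducedness forces the multiple to be `1`
    have hβeq : β = (‖β‖ / ‖α‖) • α := by
      rw [div_eq_inv_mul, mul_smul, ← h, inv_smul_smul₀ hαn.ne']
    rcases R.reduced α hα _ (by rwa [← hβeq]) with h1 | h1
    · rw [hβeq, h1, one_smul]
    · have : 0 ≤ ‖β‖ / ‖α‖ := by positivity
      linarith
  rw [real_inner_self_eq_norm_sq, real_inner_self_eq_norm_sq, ← mul_pow]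
  nlinarith

theorem sub_mem_roots_of_inner_pos {α β : E} (hα : α ∈ R.roots) (hβ : β ∈ R.roots)
    (hpos : 0 < ⟪β, α⟫_ℝ) (hne : β ≠ α) : β - α ∈ R.roots := by
  obtain ⟨n, hn⟩ := R.crystallographic α hα β hβ
  obtain ⟨m, hm⟩ := R.crystallographic β hβ α hα
  rw [real_inner_comm β α] at hm
  have hαα := R.inner_self_pos hα
  have hββ := R.inner_self_pos hβ
  have hn0 : (0 : ℤ) < n := by
    have : (0 : ℝ) < n := hn ▸ by positivity
    exact_mod_cast this
  have hm0 : (0 : ℤ) < m := by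
    have : (0 : ℝ) < m := hm ▸ by positivity
    exact_mod_cast this
  -- the product of the two Cartan integers is `4 cos² θ < 4`
  have hnm : n * m < 4 := by
    have : (n : ℝ) * m < 4 := by
      rw [← hn, ← hm, div_mul_div_comm, div_lt_iff₀ (by positivity)]
      nlinarith [R.inner_mul_inner_lt_of_inner_pos hα hβ hpos hne]
    exact_mod_cast this
  obtain h | h : n = 1 ∨ m = 1 := by
    by_contra! h
    nlinarith [h.1.lt_of_le' hn0, h.2.lt_of_le' hm0]
  · have := R.reflect_mem α hα β hβ
    rwa [hn, h, Int.cast_one, one_smul] at this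
  · have := R.neg_mem_roots (R.reflect_mem β hβ α hα)
    rwa [real_inner_comm β α, hm, h, Int.cast_one, one_smul, neg_sub] at this

theorem neg_notMem_pos {α : E} (hα : α ∈ R.pos) : -α ∉ R.pos := by
  simp only [pos, Finset.mem_filter, map_neg] at hα ⊢
  intro h
  linarith [h.2, hα.2]

theorem mem_pos_or_neg_mem_pos {γ : E} (hγ : γ ∈ R.roots) : γ ∈ R.pos ∨ -γ ∈ R.pos := by
  simp only [pos, Finset.mem_filter, map_neg, neg_pos, R.neg_mem_roots hγ, hγ, true_and]
  exact (R.posFun_ne_zero γ hγ).lt_or_gt.symm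

theorem apply_halfSum_inter_pos_sub {S : Finset E} (hS : S ⊆ R.roots) (hneg : ∀ α ∈ S, -α ∈ S)
    {w : E ≃ₗᵢ[ℝ] E} (hw : w ∈ LinearIsometryEquiv.setStabilizer (S : Set E)) :
    w ((2 : ℝ)⁻¹ • ∑ α ∈ S ∩ R.pos, α) - (2 : ℝ)⁻¹ • ∑ α ∈ S ∩ R.pos, α =
      ∑ α ∈ S ∩ R.pos with -w α ∈ S ∩ R.pos, w α := by
  have hsign : ∀ γ ∈ S, γ ∈ S ∩ R.pos ∨ -γ ∈ S ∩ R.pos := by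
    intro γ hγ
    simp only [Finset.mem_inter, hγ, hneg γ hγ, true_and]
    exact R.mem_pos_or_neg_mem_pos (hS hγ)
  exact Finset.apply_halfSum_sub_halfSum w.toLinearEquiv
    (fun α hα h => R.neg_notMem_pos (Finset.mem_inter.1 hα).2 (Finset.mem_inter.1 h).2)
    (fun α hα => hsign _ ((hw α).2 (Finset.mem_inter.1 hα).1))
    (fun α hα => hsign _ ((LinearIsometryEquiv.symm_mem_setStabilizer hw α).2
      (Finset.mem_inter.1 hα).1))

theorem apply_rho_sub_rho {w : E ≃ₗᵢ[ℝ] E}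
    (hw : w ∈ LinearIsometryEquiv.setStabilizer (R.roots : Set E)) :
    w R.rho - R.rho = ∑ α ∈ R.inv w, w α := by
  have h := R.apply_halfSum_inter_pos_sub subset_rfl (fun _ => R.neg_mem_roots) hw
  have hpos : R.roots ∩ R.pos = R.pos := Finset.inter_eq_right.2 (Finset.filter_subset _ _)
  rwa [hpos] at h

theorem filter_inter_pos_eq_inv {D : Finset E} (hneg : ∀ α ∈ D, -α ∈ D) {w : E ≃ₗᵢ[ℝ] E}
    (hw : ∀ α ∈ D, w α ∈ D) (hΦ : R.inv w ⊆ D) :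
    (D ∩ R.pos).filter (fun α => -w α ∈ D ∩ R.pos) = R.inv w := by
  ext α
  simp only [inv, Finset.mem_filter, Finset.mem_inter]
  constructor
  · rintro ⟨⟨_, hα⟩, _, hwα⟩
    exact ⟨hα, hwα⟩
  · rintro ⟨hα, hwα⟩
    have hαD : α ∈ D := hΦ (Finset.mem_filter.2 ⟨hα, hwα⟩)
    exact ⟨⟨hαD, hα⟩, hneg _ (hw α hαD), hwα⟩

structure IsSymmetricClosedSubsystem (D : Finset E) : Prop where
  subset : D ⊆ R.roots
  neg_mem : ∀ α ∈ D, -α ∈ D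
  add_mem : ∀ α ∈ D, ∀ β ∈ D, α + β ∈ R.roots → α + β ∈ D

namespace IsSymmetricClosedSubsystem

variable {R} {D : Finset E}

theorem sub_mem (hD : R.IsSymmetricClosedSubsystem D) {α β : E} (hα : α ∈ D) (hβ : β ∈ D)
    (h : β - α ∈ R.roots) : β - α ∈ D := by
  rw [sub_eq_add_neg] at h ⊢
  exact hD.add_mem β hβ (-α) (hD.neg_mem α hα) h

/-- Descending the `α`-string through `β` two steps at a time: the pairing of `β - α` with `α`
is `n - 2`. -/
theorem sub_natCast_smul_mem (hD : R.IsSymmetricClosedSubsystem D) (n : ℕ) :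
    ∀ {α β : E}, α ∈ D → β ∈ D → 2 * ⟪β, α⟫_ℝ / ⟪α, α⟫_ℝ = n → β - (n : ℝ) • α ∈ D := by
  induction n using Nat.strong_induction_on with
  | _ n ih =>
  intro α β hα hβ hn
  have hαα := R.inner_self_pos (hD.subset hα)
  have hroot : β - (n : ℝ) • α ∈ R.roots := hn ▸ R.reflect_mem α (hD.subset hα) β (hD.subset hβ)
  obtain rfl | hn0 := Nat.eq_zero_or_pos n
  · simpa using hβ
  have hpair : 2 * ⟪β, α⟫_ℝ = n * ⟪α, α⟫_ℝ := by
    rw [← hn, div_mul_cancel₀ _ hαα.ne']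
  by_cases hβα : β = α
  · subst hβα
    have h2 : (n : ℝ) = 2 := by rw [← hn, mul_div_assoc, div_self hαα.ne', mul_one]
    rw [h2, two_smul, sub_add_cancel_left]
    exact hD.neg_mem β hβ
  have hpos : 0 < ⟪β, α⟫_ℝ := by
    have : (0 : ℝ) < n := by exact_mod_cast hn0
    nlinarith
  have hsub := hD.sub_mem hα hβ
    (R.sub_mem_roots_of_inner_pos (hD.subset hα) (hD.subset hβ) hpos hβα)
  obtain rfl | hn2 : n = 1 ∨ 2 ≤ n := by omega
  · simpa using hsub
  have hpair' : 2 * ⟪β - α, α⟫_ℝ / ⟪α, α⟫_ℝ = ((n - 2 : ℕ) : ℝ) := by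
    rw [inner_sub_left, div_eq_iff hαα.ne', Nat.cast_sub hn2]
    linear_combination hpair
  have hstep := ih (n - 2) (by omega) hα hsub hpair'
  have hsplit : β - (n : ℝ) • α = (β - α - ((n - 2 : ℕ) : ℝ) • α) + -α := by
    rw [Nat.cast_sub hn2]
    module
  rw [hsplit] at hroot ⊢
  exact hD.add_mem _ hstep _ (hD.neg_mem α hα) hroot

theorem reflect_mem (hD : R.IsSymmetricClosedSubsystem D) {α β : E} (hα : α ∈ D) (hβ : β ∈ D) :
    reflect α β ∈ D := by
  suffices key : ∀ α ∈ D, 0 ≤ ⟪β, α⟫_ℝ → reflect α β ∈ D by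
    rcases le_total 0 ⟪β, α⟫_ℝ with h | h
    · exact key α hα h
    · rw [← reflect_neg]
      exact key (-α) (hD.neg_mem α hα) (by rw [inner_neg_right]; linarith)
  intro α hα hnonneg
  obtain ⟨n, hn⟩ := R.crystallographic α (hD.subset hα) β (hD.subset hβ)
  have hn0 : 0 ≤ n := by
    have : (0 : ℝ) ≤ n := hn ▸ div_nonneg (by linarith) real_inner_self_nonneg
    exact_mod_cast this
  lift n to ℕ using hn0
  rw [reflect_apply, hn]
  exact hD.sub_natCast_smul_mem n hα hβ hn

end IsSymmetricClosedSubsystem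

end RootSystemData

theorem projection_intertwines_affine_actions_general
    {F : Type*} [NormedAddCommGroup F] [InnerProductSpace ℝ F]
    (R : RootSystemData F) (D : Finset F)
    (hsub : D ⊆ R.roots)
    (hsymm : ∀ α ∈ D, -α ∈ D)
    (hclosed : ∀ α ∈ D, ∀ β ∈ D, α + β ∈ R.roots → α + β ∈ D)
    (w : F ≃ₗᵢ[ℝ] F)
    (hw : w ∈ Subgroup.closure { s : F ≃ₗᵢ[ℝ] F | ∃ α ∈ D, s = RootSystemData.reflect α })
    (hΦ : R.inv w ⊆ D) :
    ∀ lam : F,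
      (Submodule.orthogonalProjection (Submodule.span ℝ (D : Set F)) (w (lam + R.rho) - R.rho) : F)
        = w ((Submodule.orthogonalProjection (Submodule.span ℝ (D : Set F)) lam : F)
              + (2 : ℝ)⁻¹ • ∑ α ∈ D ∩ R.pos, α)
          - (2 : ℝ)⁻¹ • ∑ α ∈ D ∩ R.pos, α := by
  intro lam
  have hD : R.IsSymmetricClosedSubsystem D := ⟨hsub, hsymm, hclosed⟩
  have hwD : w ∈ LinearIsometryEquiv.setStabilizer (D : Set F) :=
    RootSystemData.closure_reflect_le_setStabilizer (fun _ hα _ hβ => hD.reflect_mem hα hβ) hw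
  have hwR : w ∈ LinearIsometryEquiv.setStabilizer (R.roots : Set F) :=
    RootSystemData.closure_reflect_le_setStabilizer
      (fun _ hα _ hβ => R.reflect_mem_roots (hsub hα) hβ) hw
  set K := Submodule.span ℝ (D : Set F)
  set ρD := (2 : ℝ)⁻¹ • ∑ α ∈ D ∩ R.pos, α
  set S := ∑ α ∈ R.inv w, w α
  have hρ : w R.rho - R.rho = S := R.apply_rho_sub_rho hwR
  have hρD : w ρD - ρD = S := by
    rw [R.apply_halfSum_inter_pos_sub hsub hsymm hwD,
      R.filter_inter_pos_eq_inv hsymm (fun α => (hwD α).2) hΦ]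
  have hSK : S ∈ K :=
    Submodule.sum_mem _ fun α hα => Submodule.subset_span ((hwD α).2 (hΦ hα))
  have hKw : K.map (w.toLinearEquiv : F →ₗ[ℝ] F) = K := by
    rw [Submodule.map_span]
    exact congrArg _ (LinearIsometryEquiv.image_eq_of_mem_setStabilizer hwD)
  show K.starProjection (w (lam + R.rho) - R.rho) = w (K.starProjection lam + ρD) - ρD
  calc K.starProjection (w (lam + R.rho) - R.rho) = K.starProjection (w lam) + S := by
        rw [map_add, add_sub_assoc, hρ, map_add, Submodule.starProjection_eq_self_iff.2 hSK]
    _ = w (K.starProjection lam + ρD) - ρD := by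
        rw [K.starProjection_apply_of_map_eq hKw, map_add, add_sub_assoc, hρD]

/-- Theorem 3.3(b), computational content: for a symmetric closed subsystem `Δ ⊆ Δ̃`, the
orthogonal projection `r : Ẽ → E = span_ℝ(Δ)` intertwines, for every `w` in the reflection
subgroup `W` generated by `Δ` whose inversion set in `Δ̃` is contained in `Δ`, the affine action
of `w` on `Ẽ` (defined with `ρ̃`) with its affine action on `E` (defined with `ρ`, the half-sum
of `Δ⁺ = Δ ∩ Δ̃⁺`). -/
theorem projection_intertwines_affine_actions
    {F : Type*} [NormedAddCommGroup F] [InnerProductSpace ℝ F] [FiniteDimensional ℝ F]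
    (R : RootSystemData F) (D : Finset F)
    (hsub : D ⊆ R.roots)
    (hsymm : ∀ α ∈ D, -α ∈ D)
    (hclosed : ∀ α ∈ D, ∀ β ∈ D, α + β ∈ R.roots → α + β ∈ D)
    (w : F ≃ₗᵢ[ℝ] F)
    (hw : w ∈ Subgroup.closure { s : F ≃ₗᵢ[ℝ] F | ∃ α ∈ D, s = RootSystemData.reflect α })
    (hΦ : R.inv w ⊆ D) :
    ∀ lam : F,
      (Submodule.orthogonalProjection (Submodule.span ℝ (D : Set F)) (w (lam + R.rho) - R.rho) : F)
        = w ((Submodule.orthogonalProjection (Submodule.span ℝ (D : Set F)) lam : F)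
              + (2 : ℝ)⁻¹ • ∑ α ∈ D ∩ R.pos, α)
          - (2 : ℝ)⁻¹ • ∑ α ∈ D ∩ R.pos, α :=
  projection_intertwines_affine_actions_general R D hsub hsymm hclosed w hw hΦ
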